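/- For every n ≥ 1, the coefficient of t^1 in the polynomial p_n(t) = Σ_{m=0}^{n} d_m(n)·(t−1)^{n−m} equals 3^n − n − 1. (This is the second Betti number β_2(X(B_n)) of the toric variety X(B_n).) -/

import Mathlib

/-- The set `𝓑` of nonempty subsets `B` of `{-n, …, -1, 1, …, n}` such that for no
`i ∈ {1, …, n}` both `i` and `-i` belong to `B`. -/
def calB (n : ℕ) : Set (Finset ℤ) :=
  {B | B.Nonempty ∧ (∀ z ∈ B, z ≠ 0 ∧ |z| ≤ (n : ℤ)) ∧
    ∀ i : ℤ, 1 ≤ i → i ≤ (n : ℤ) → ¬(i ∈ B ∧ -i ∈ B)}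

/-- `d_m(n)`: the number of chains `B^{(m)} ⊊ ⋯ ⊊ B^{(1)}` of `m` elements of `𝓑`
(the number of `m`-dimensional cones of the fan `Σ(B_n)`); `d_0(n) = 1`. -/
noncomputable def dB (n m : ℕ) : ℕ :=
  Set.ncard {c : Fin m → Finset ℤ |
    (∀ k l : Fin m, k < l → c l ⊂ c k) ∧ ∀ k, c k ∈ calB n}

/-!
A chain `B^{(m)} ⊊ ⋯ ⊊ B^{(1)}` in `𝓑` is the same thing as a map `g` sending each
`i ∈ {1, …, n}` either to "absent" or to a sign `ε` together with the last level `j` at which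
`ε i` occurs, such that every level is attained. Inclusion–exclusion over the missed levels gives
`d_m(n) = Δ^m f (0)` for `f x = (2x + 1)^n`. Expanding the differences, the coefficient of `t` in
`p_n` is `∑_k (-1)^(n-k-1) C(n+1, k+2) (2k+1)^n`. Together with the two terms `-3^n` and `n + 1`
this sum is the `(n+1)`-st forward difference at `0` of the degree `n` polynomial `(2x - 3)^n`,
which vanishes.
-/

open Finset Polynomial fwdDiff

lemma mem_calB_iff {n : ℕ} {B : Finset ℤ} :
    B ∈ calB n ↔ B.Nonempty ∧ ∀ z ∈ B, (z ≠ 0 ∧ |z| ≤ n) ∧ -z ∉ B := by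
  refine and_congr_right fun _ => ⟨fun ⟨hB, hpm⟩ z hz => ⟨hB z hz, fun hz' => ?_⟩,
    fun h => ⟨fun z hz => (h z hz).1, fun i hi _ ⟨hi', hi''⟩ => (h i hi').2 hi''⟩⟩
  obtain ⟨hz0, hzn⟩ := hB z hz
  rcases lt_or_gt_of_ne hz0 with hneg | hpos
  · exact hpm (-z) (by omega) (by rw [abs_of_neg hneg] at hzn; omega) ⟨hz', by simpa using hz⟩
  · exact hpm z hpos (by rw [abs_of_pos hpos] at hzn; omega) ⟨hz, hz'⟩

def signedIndex {n : ℕ} (x : Fin n × Bool) : ℤ :=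
  if x.2 then x.1 + 1 else -(x.1 + 1)

lemma signedIndex_injective {n : ℕ} : Function.Injective (signedIndex (n := n)) := by
  rintro ⟨i, b⟩ ⟨j, c⟩ h
  cases b <;> cases c <;> simp only [signedIndex, Bool.false_eq_true, if_true, if_false] at h <;>
    first | omega | simp only [Prod.mk.injEq, and_true]; omega

lemma mem_range_signedIndex {n : ℕ} {z : ℤ} :
    z ∈ Set.range (signedIndex (n := n)) ↔ z ≠ 0 ∧ |z| ≤ n := by
  constructor
  · rintro ⟨⟨i, b⟩, rfl⟩
    cases b <;> simp only [signedIndex, Bool.false_eq_true, if_true, if_false, abs_le] <;> omega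
  · rintro ⟨hz0, hzn⟩
    rcases lt_or_gt_of_ne hz0 with hneg | hpos
    · rw [abs_of_neg hneg] at hzn
      exact ⟨(⟨(-z - 1).toNat, by omega⟩, false), by simp [signedIndex]; omega⟩
    · rw [abs_of_pos hpos] at hzn
      exact ⟨(⟨(z - 1).toNat, by omega⟩, true), by simp [signedIndex]; omega⟩

lemma neg_signedIndex {n : ℕ} (i : Fin n) (b : Bool) :
    -signedIndex (i, b) = signedIndex (i, !b) := by
  cases b <;> simp [signedIndex]

def ReachesLevel {σ κ : Type*} [LE κ] (v : Option (σ × κ)) (s : σ) (k : κ) : Prop :=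
  ∃ j, v = some (s, j) ∧ k ≤ j

lemma reachesLevel_injective {σ κ : Type*} [PartialOrder κ] :
    Function.Injective (ReachesLevel (σ := σ) (κ := κ)) := by
  intro v v' h
  have top : ∀ {s : σ} {j : κ}, ReachesLevel (some (s, j)) s j := ⟨_, rfl, le_rfl⟩
  rcases v with _ | ⟨s, j⟩ <;> rcases v' with _ | ⟨s', j'⟩
  · rfl
  · obtain ⟨_, h1, -⟩ : ReachesLevel none s' j' := h ▸ top
    cases h1
  · obtain ⟨_, h1, -⟩ : ReachesLevel none s j := h ▸ top
    cases h1
  · obtain ⟨a, h1, hja⟩ : ReachesLevel (some (s', j')) s j := h ▸ top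
    obtain ⟨b, h2, hjb⟩ : ReachesLevel (some (s, j)) s' j' := h ▸ top
    simp only [Option.some.injEq, Prod.mk.injEq] at h1 h2
    obtain ⟨rfl, rfl⟩ := h1
    obtain ⟨-, rfl⟩ := h2
    rw [le_antisymm hja hjb]

def CoversLevels {ι σ κ : Type*} (g : ι → Option (σ × κ)) : Prop :=
  ∀ k, ∃ i s, g i = some (s, k)

instance {ι σ κ : Type*} [Fintype ι] [Fintype σ] [Fintype κ] [DecidableEq σ] [DecidableEq κ]
    (g : ι → Option (σ × κ)) : Decidable (CoversLevels g) := by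
  unfold CoversLevels; infer_instance

section Chains

variable {n m : ℕ}

open Classical in
noncomputable def chainOf (g : Fin n → Option (Bool × Fin m)) (k : Fin m) : Finset ℤ :=
  image signedIndex {x | ReachesLevel (g x.1) x.2 k}

lemma signedIndex_mem_chainOf {g : Fin n → Option (Bool × Fin m)} {k : Fin m} {i : Fin n}
    {b : Bool} : signedIndex (i, b) ∈ chainOf g k ↔ ReachesLevel (g i) b k := by
  simp [chainOf, signedIndex_injective.mem_finset_image]

lemma mem_range_of_mem_chainOf {g : Fin n → Option (Bool × Fin m)} {k : Fin m} {z : ℤ}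
    (hz : z ∈ chainOf g k) : z ∈ Set.range (signedIndex (n := n)) := by
  obtain ⟨x, -, rfl⟩ := mem_image.1 hz
  exact ⟨x, rfl⟩

lemma chainOf_injective : Function.Injective (chainOf (n := n) (m := m)) := by
  intro g g' h
  funext i
  apply reachesLevel_injective
  funext b k
  simp only [← signedIndex_mem_chainOf, h]

lemma chainOf_strictAnti {g : Fin n → Option (Bool × Fin m)} (hg : CoversLevels g) :
    StrictAnti (chainOf g) := by
  intro k l hkl
  refine (ssubset_iff_of_subset fun z hz => ?_).2 ?_
  · obtain ⟨x, rfl⟩ := mem_range_of_mem_chainOf hz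
    obtain ⟨j, hj, hlj⟩ := signedIndex_mem_chainOf.1 hz
    exact signedIndex_mem_chainOf.2 ⟨j, hj, hkl.le.trans hlj⟩
  · obtain ⟨i, b, hi⟩ := hg k
    refine ⟨_, signedIndex_mem_chainOf.2 ⟨k, hi, le_rfl⟩, fun hl => ?_⟩
    obtain ⟨j, hj, hlj⟩ := signedIndex_mem_chainOf.1 hl
    simp only [hi, Option.some.injEq, Prod.mk.injEq, true_and] at hj
    exact (hj ▸ hkl).not_ge hlj

lemma chainOf_mem_calB {g : Fin n → Option (Bool × Fin m)} (hg : CoversLevels g) (k : Fin m) :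
    chainOf g k ∈ calB n := by
  refine mem_calB_iff.2 ⟨?_, fun z hz => ?_⟩
  · obtain ⟨i, b, hi⟩ := hg k
    exact ⟨_, signedIndex_mem_chainOf.2 ⟨k, hi, le_rfl⟩⟩
  · obtain ⟨⟨i, b⟩, rfl⟩ := mem_range_of_mem_chainOf hz
    refine ⟨mem_range_signedIndex.1 ⟨_, rfl⟩, ?_⟩
    rw [neg_signedIndex, signedIndex_mem_chainOf]
    rintro ⟨j', hj', -⟩
    obtain ⟨j, hj, -⟩ := signedIndex_mem_chainOf.1 hz
    simp [hj] at hj'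

lemma exists_reachesLevel {c : Fin m → Finset ℤ} (hc : Antitone c) (hB : ∀ k, c k ∈ calB n)
    (i : Fin n) : ∃ v, ∀ b k, signedIndex (i, b) ∈ c k ↔ ReachesLevel v b k := by
  classical
  by_cases h : ∃ b k, signedIndex (i, b) ∈ c k
  swap
  · simp only [not_exists] at h
    exact ⟨none, fun b k => by simp [h b k, ReachesLevel]⟩
  obtain ⟨b, k₀, hk₀⟩ := h
  set L : Finset (Fin m) := {k | signedIndex (i, b) ∈ c k}
  have hL : L.Nonempty := ⟨k₀, by simpa [L]⟩
  have hmax : signedIndex (i, b) ∈ c (L.max' hL) := by simpa [L] using L.max'_mem hL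
  refine ⟨some (b, L.max' hL), fun b' k => ?_⟩
  rcases Bool.eq_or_eq_not b' b with rfl | rfl
  · simp only [ReachesLevel, Option.some.injEq, Prod.mk.injEq, true_and, exists_eq_left']
    exact ⟨fun hk => L.le_max' k (by simpa [L]), fun hk => hc hk hmax⟩
  · simp only [ReachesLevel, Option.some.injEq, Prod.mk.injEq, Bool.eq_not_self, false_and,
      exists_false, iff_false]
    -- otherwise both signs of `i + 1` lie in the larger of `c k` and `c (L.max' hL)`
    intro hk
    have hopp := ((mem_calB_iff.1 (hB (min k (L.max' hL)))).2 _ (hc (min_le_right _ _) hmax)).2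
    exact hopp (neg_signedIndex i b ▸ hc (min_le_left _ _) hk)

lemma exists_chainOf_eq {c : Fin m → Finset ℤ} (hc : StrictAnti c) (hB : ∀ k, c k ∈ calB n) :
    ∃ g : Fin n → Option (Bool × Fin m), CoversLevels g ∧ chainOf g = c := by
  choose g hg using exists_reachesLevel hc.antitone hB
  have range_of_mem : ∀ {k z}, z ∈ c k → z ∈ Set.range (signedIndex (n := n)) :=
    fun hz => mem_range_signedIndex.2 ((mem_calB_iff.1 (hB _)).2 _ hz).1
  refine ⟨g, fun k => ?_, funext fun k => ext fun z => ⟨fun hz => ?_, fun hz => ?_⟩⟩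
  · obtain ⟨z, hzk, hz⟩ : ∃ z ∈ c k, ∀ l, k < l → z ∉ c l := by
      by_cases hk : IsMax k
      · obtain ⟨z, hz⟩ := (mem_calB_iff.1 (hB k)).1
        exact ⟨z, hz, fun l hl => absurd hl hk.not_lt⟩
      · obtain ⟨z, hzk, hz⟩ := exists_of_ssubset (hc (Order.lt_succ_of_not_isMax hk))
        exact ⟨z, hzk, fun l hl hzl => hz (hc.antitone (Order.succ_le_of_lt hl) hzl)⟩
    obtain ⟨⟨i, b⟩, rfl⟩ := range_of_mem hzk
    obtain ⟨j, hj, hkj⟩ := (hg i b k).1 hzk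
    obtain rfl : j = k :=
      hkj.antisymm' (not_lt.1 fun hlt => hz j hlt ((hg i b j).2 ⟨j, hj, le_rfl⟩))
    exact ⟨i, b, hj⟩
  · obtain ⟨⟨i, b⟩, rfl⟩ := mem_range_of_mem_chainOf hz
    exact (hg i b k).2 (signedIndex_mem_chainOf.1 hz)
  · obtain ⟨⟨i, b⟩, rfl⟩ := range_of_mem hz
    exact signedIndex_mem_chainOf.2 ((hg i b k).1 hz)

end Chains

lemma dB_eq_card (n m : ℕ) :
    dB n m = #{g : Fin n → Option (Bool × Fin m) | CoversLevels g} := by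
  have hchains : {c : Fin m → Finset ℤ | (∀ k l, k < l → c l ⊂ c k) ∧ ∀ k, c k ∈ calB n}
      = chainOf '' {g : Fin n → Option (Bool × Fin m) | CoversLevels g} := by
    ext c
    constructor
    · rintro ⟨hc, hB⟩
      obtain ⟨g, hg, rfl⟩ := exists_chainOf_eq hc hB
      exact ⟨g, hg, rfl⟩
    · rintro ⟨g, hg, rfl⟩
      exact ⟨chainOf_strictAnti hg, chainOf_mem_calB hg⟩
  rw [dB, hchains, Set.ncard_image_of_injective _ chainOf_injective, ← Set.ncard_coe_finset,
    coe_filter]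
  simp

lemma card_coversLevels (ι σ κ : Type*) [Fintype ι] [DecidableEq ι] [Fintype σ] [DecidableEq σ]
    [Fintype κ] [DecidableEq κ] :
    (#{g : ι → Option (σ × κ) | CoversLevels g} : ℤ) =
      ∑ j ∈ range (Fintype.card κ + 1),
        (-1 : ℤ) ^ (Fintype.card κ - j) * (Fintype.card κ).choose j *
          (Fintype.card σ * j + 1) ^ Fintype.card ι := by
  set S : κ → Finset (ι → Option (σ × κ)) := fun k => {g | ∀ i s, g i ≠ some (s, k)}
  have hcovers :
      ({g | CoversLevels g} : Finset (ι → Option (σ × κ))) = univ.inf fun k => (S k)ᶜ := by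
    ext g
    simp only [mem_filter, mem_univ, true_and, mem_inf, mem_compl, S]
    simp [CoversLevels]
  have hinf (t : Finset κ) : t.inf S = Fintype.piFinset fun _ => insertNone (univ ×ˢ tᶜ) := by
    ext g
    simp only [mem_inf, S, mem_filter, mem_univ, true_and, Fintype.mem_piFinset, mem_insertNone,
      mem_product, mem_compl]
    exact ⟨fun h i a hg hk => h _ hk i a.1 hg, fun h k hk i s hg => h i _ hg hk⟩
  have hcard (t : Finset κ) :
      (#(t.inf S) : ℤ) =
        ((Fintype.card σ * (Fintype.card κ - #t) + 1) ^ Fintype.card ι : ℕ) := by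
    rw [hinf, Fintype.card_piFinset, prod_const, card_insertNone, card_product, card_compl,
      card_univ, card_univ]
  rw [hcovers, inclusion_exclusion_card_inf_compl]
  simp_rw [hcard]
  rw [sum_powerset_apply_card fun j =>
      (-1 : ℤ) ^ j * ((Fintype.card σ * (Fintype.card κ - j) + 1) ^ Fintype.card ι : ℕ),
    card_univ, ← sum_range_reflect]
  refine sum_congr rfl fun j hj => ?_
  have hjK : j ≤ Fintype.card κ := Nat.lt_succ_iff.1 (mem_range.1 hj)
  rw [add_tsub_cancel_right, Nat.choose_symm hjK, Nat.sub_sub_self hjK, nsmul_eq_mul]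
  push_cast
  ring

lemma dB_eq_fwdDiff (n m : ℕ) :
    (dB n m : ℤ) = Δ_[1] ^[m] (fun k : ℕ => (2 * k + 1 : ℤ) ^ n) 0 := by
  rw [dB_eq_card, card_coversLevels, fwdDiff_iter_eq_sum_shift]
  simp [smul_eq_mul, mul_comm]

lemma coeff_one_X_sub_one_pow {R : Type*} [CommRing R] (j : ℕ) :
    ((X - 1 : R[X]) ^ j).coeff 1 = (-1) ^ (j - 1) * j := by
  rw [sub_eq_add_neg, ← C_1, ← C_neg, coeff_X_add_C_pow, Nat.choose_one_right]

lemma sum_range_sub_mul_choose (n k : ℕ) :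
    ∑ m ∈ range (n + 1), (n - m) * m.choose k = (n + 1).choose (k + 2) := by
  have hockey (n : ℕ) : ∑ m ∈ range (n + 1), m.choose k = (n + 1).choose (k + 1) := by
    induction n with
    | zero => cases k <;> simp [Nat.choose_eq_zero_of_lt]
    | succ n ih => rw [sum_range_succ, ih, Nat.choose_succ_succ' (n + 1) k, add_comm]
  induction n with
  | zero => simp [Nat.choose_eq_zero_of_lt]
  | succ n ih =>
    rw [sum_range_succ, Nat.sub_self, zero_mul, add_zero, Nat.choose_succ_succ' (n + 1) (k + 1),
      ← ih, ← hockey, ← sum_add_distrib]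
    refine sum_congr rfl fun m hm => ?_
    rw [Nat.sub_add_comm (Nat.lt_succ_iff.1 (mem_range.1 hm)), add_mul, one_mul, add_comm]

lemma coeff_one_sum_fwdDiff {R : Type*} [CommRing R] (f : ℕ → R) (n : ℕ) :
    (∑ m ∈ range (n + 1), C (Δ_[1] ^[m] f 0) * (X - 1) ^ (n - m)).coeff 1 =
      ∑ k ∈ range (n + 1), ((-1 : ℤ) ^ (n - k - 1) * (n + 1).choose (k + 2)) • f k := by
  have hsign : ∀ m ∈ range (n + 1), ∀ k,
      ((-1 : ℤ) ^ (m - k) * m.choose k) * ((-1) ^ (n - m - 1) * (n - m : ℕ))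
        = (-1) ^ (n - k - 1) * ((n - m) * m.choose k : ℕ) := by
    intro m hm k
    rcases lt_or_ge m k with hmk | hkm
    · simp [Nat.choose_eq_zero_of_lt hmk]
    rcases eq_or_lt_of_le (Nat.lt_succ_iff.1 (mem_range.1 hm)) with rfl | hmn
    · simp
    · rw [show n - k - 1 = (m - k) + (n - m - 1) by omega, pow_add]
      push_cast
      ring
  have hextend : ∀ m ∈ range (n + 1), Δ_[1] ^[m] f 0 =
      ∑ k ∈ range (n + 1), ((-1 : ℤ) ^ (m - k) * m.choose k) • f k := by
    intro m hm
    rw [fwdDiff_iter_eq_sum_shift]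
    simp only [zero_add, smul_eq_mul, mul_one]
    refine sum_subset (range_subset_range.2 (mem_range.1 hm)) fun k _ hk => ?_
    simp [Nat.choose_eq_zero_of_lt (not_lt.1 (mt mem_range.2 hk))]
  calc (∑ m ∈ range (n + 1), C (Δ_[1] ^[m] f 0) * (X - 1) ^ (n - m)).coeff 1
      = ∑ m ∈ range (n + 1), ∑ k ∈ range (n + 1),
          (((-1 : ℤ) ^ (m - k) * m.choose k) * ((-1) ^ (n - m - 1) * (n - m : ℕ))) • f k := by
        simp only [finsetSum_coeff, coeff_C_mul, coeff_one_X_sub_one_pow]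
        refine sum_congr rfl fun m hm => ?_
        rw [hextend m hm, sum_mul]
        refine sum_congr rfl fun k _ => ?_
        simp only [zsmul_eq_mul]
        push_cast
        ring
    _ = ∑ k ∈ range (n + 1), ((-1 : ℤ) ^ (n - k - 1) * (n + 1).choose (k + 2)) • f k := by
        rw [sum_comm]
        refine sum_congr rfl fun k _ => ?_
        rw [← sum_smul, sum_congr rfl fun m hm => hsign m hm k, ← mul_sum, ← Nat.cast_sum,
          sum_range_sub_mul_choose]

lemma sum_neg_one_pow_choose_smul_odd_pow (n : ℕ) :
    ∑ k ∈ range (n + 1), ((-1 : ℤ) ^ (n - k - 1) * (n + 1).choose (k + 2)) • (2 * k + 1 : ℤ) ^ n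
      = 3 ^ n - n - 1 := by
  have hdeg : ((2 * X - 3 : ℤ[X]) ^ n).natDegree < n + 1 :=
    Nat.lt_succ_of_le (by compute_degree)
  have hvanish : ∑ k ∈ range (n + 2),
      (-1 : ℤ) ^ (n + 1 - k) * (n + 1).choose k * (2 * k - 3) ^ n = 0 := by
    simpa [fwdDiff_iter_eq_sum_shift] using congr_fun (fwdDiff_iter_eq_zero_of_degree_lt hdeg) 0
  rw [sum_range_succ', sum_range_succ'] at hvanish
  rw [sum_range_succ, Nat.choose_eq_zero_of_lt (by omega : n + 1 < n + 2)]
  have hodd : ∀ k ∈ range n, (-1 : ℤ) ^ (n + 1 - (k + 1 + 1)) * (n + 1).choose (k + 1 + 1)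
      * (2 * (k + 1 + 1 : ℕ) - 3) ^ n = ((-1 : ℤ) ^ (n - k - 1) * (n + 1).choose (k + 2))
      • (2 * k + 1 : ℤ) ^ n := fun k _ => by
    rw [smul_eq_mul, show n + 1 - (k + 1 + 1) = n - k - 1 by omega]
    push_cast
    ring
  have hsq : (-1 : ℤ) ^ n * (-1) ^ n = 1 := by rw [← mul_pow]; simp
  rw [sum_congr rfl hodd] at hvanish
  simp only [Int.reduceNeg, Int.zsmul_eq_mul, zero_add, add_tsub_cancel_right,
    Nat.choose_one_right, Nat.cast_add, Nat.cast_one, mul_one, Int.reduceSub, tsub_zero,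
    Nat.choose_zero_right, CharP.cast_eq_zero, mul_zero, zero_sub, tsub_self, zero_tsub, pow_zero,
    zero_mul, add_zero] at hvanish ⊢
  rw [neg_pow (3 : ℤ)] at hvanish
  linear_combination hvanish + (3 ^ n - n - 1 : ℤ) * hsq

theorem stmt8_general (n : ℕ) :
    (∑ m ∈ Finset.range (n + 1),
        (dB n m : Polynomial ℤ) * (Polynomial.X - 1) ^ (n - m)).coeff 1
      = (3 : ℤ) ^ n - (n : ℤ) - 1 := by
  simp only [← map_natCast C, dB_eq_fwdDiff]
  rw [coeff_one_sum_fwdDiff, sum_neg_one_pow_choose_smul_odd_pow]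

/-- The coefficient of `t^1` in `p_n(t) = Σ_{m=0}^{n} d_m(n)·(t-1)^{n-m}` is
`3^n - n - 1` (the second Betti number `β_2(X(B_n))`). -/
theorem stmt8 (n : ℕ) (hn : 1 ≤ n) :
    (∑ m ∈ Finset.range (n + 1),
        (dB n m : Polynomial ℤ) * (Polynomial.X - 1) ^ (n - m)).coeff 1
      = (3 : ℤ) ^ n - (n : ℤ) - 1 :=
  stmt8_general n
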